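/- arXiv:2602.22342 — 5 statements merged into one kernel-verified Lean document; each statement's English description precedes it below -/
import Mathlib

section
/- Any real-valued Gaussian random variable with mean zero and variance σ² ≤ 1 has the same distribution as the average (X+Y)/2 of two (not necessarily independent) standard Gaussian random variables X, Y. -/
open MeasureTheory ProbabilityTheory
open scoped NNReal

/-! If `U ~ N(0, σ²)` and `V ~ N(0, 1 - σ²)` are independent, then `X = U + V` and `Y = U - V`
are both standard Gaussians, while `(X + Y) / 2 = U`. -/

section GaussianRealProd

variable {m₁ m₂ : ℝ} {v₁ v₂ : ℝ≥0}

lemma gaussianReal_prod_map_add :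
    ((gaussianReal m₁ v₁).prod (gaussianReal m₂ v₂)).map (fun p ↦ p.1 + p.2) =
      gaussianReal (m₁ + m₂) (v₁ + v₂) :=
  gaussianReal_conv_gaussianReal

lemma gaussianReal_prod_map_sub :
    ((gaussianReal m₁ v₁).prod (gaussianReal m₂ v₂)).map (fun p ↦ p.1 - p.2) =
      gaussianReal (m₁ - m₂) (v₁ + v₂) := by
  have hsub : (fun p : ℝ × ℝ ↦ p.1 - p.2) = (fun p ↦ p.1 + p.2) ∘ Prod.map id (fun x ↦ -x) := by
    ext p; simp [sub_eq_add_neg]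
  rw [hsub, ← Measure.map_map (by fun_prop) (by fun_prop),
    ← Measure.map_prod_map _ _ measurable_id (by fun_prop), Measure.map_id, gaussianReal_map_neg,
    gaussianReal_prod_map_add, sub_eq_add_neg]

end GaussianRealProd

/-- Any real-valued Gaussian random variable with mean zero and variance `σ² ≤ 1` has the same
distribution as the average `(X+Y)/2` of two (not necessarily independent) standard Gaussian
random variables. -/
theorem gaussian_variance_le_one_eq_average_of_two_std_gaussians (σ2 : NNReal) (h : σ2 ≤ 1) :
    ∃ (Ω : Type) (_ : MeasurableSpace Ω) (μ : Measure Ω) (_ : IsProbabilityMeasure μ)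
      (X Y : Ω → ℝ), Measurable X ∧ Measurable Y ∧
      μ.map X = gaussianReal 0 1 ∧ μ.map Y = gaussianReal 0 1 ∧
      μ.map (fun ω => (X ω + Y ω) / 2) = gaussianReal 0 σ2 := by
  have hvar : σ2 + (1 - σ2) = 1 := add_tsub_cancel_of_le h
  refine ⟨ℝ × ℝ, inferInstance, (gaussianReal 0 σ2).prod (gaussianReal 0 (1 - σ2)), inferInstance,
    fun p ↦ p.1 + p.2, fun p ↦ p.1 - p.2, by fun_prop, by fun_prop, ?_, ?_, ?_⟩
  · rw [gaussianReal_prod_map_add, add_zero, hvar]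
  · rw [gaussianReal_prod_map_sub, sub_zero, hvar]
  · have haverage : (fun p : ℝ × ℝ ↦ (p.1 + p.2 + (p.1 - p.2)) / 2) = Prod.fst := by
      ext p; ring
    rw [haverage, Measure.map_fst_prod, measure_univ, one_smul]
end

section
/- Let G be a standard Gaussian random vector in ℝⁿ and let A be an n×n real matrix with operator norm ‖A‖ ≤ 1. Then there exist standard Gaussian random vectors X, Y in ℝⁿ (defined on a common probability space, not necessarily independent) such that A G has the same distribution as (X+Y)/2. -/
/-!
Choose `B` with `A Aᵀ + B Bᵀ = 1` (possible since `‖A‖ ≤ 1` makes `1 - A Aᵀ` positive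
semidefinite), and let `G, G'` be independent standard Gaussians. Then `X = A G + B G'` and
`Y = A G - B G'` are centred Gaussians with covariance `A Aᵀ + B Bᵀ = 1`, as their characteristic
functions show, while `(X + Y) / 2 = A G`.
-/

open MeasureTheory ProbabilityTheory

/-- The standard Gaussian measure on `ℝⁿ`. -/
noncomputable def stdGaussian (n : ℕ) : Measure (Fin n → ℝ) :=
  Measure.pi fun _ => gaussianReal 0 1

open Matrix WithLp ContinuousLinearMap Complex
open scoped RealInnerProductSpace

section Gaussian

lemma charFun_map_continuousLinearMap {E F : Type*} [NormedAddCommGroup E]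
    [InnerProductSpace ℝ E] [CompleteSpace E] [MeasurableSpace E] [BorelSpace E]
    [NormedAddCommGroup F] [InnerProductSpace ℝ F] [CompleteSpace F] [MeasurableSpace F]
    [BorelSpace F] (μ : Measure E) (L : E →L[ℝ] F) (t : F) :
    charFun (μ.map L) t = charFun μ (adjoint L t) := by
  rw [charFun_apply, charFun_apply, integral_map L.continuous.aemeasurable (by fun_prop)]
  simp_rw [adjoint_inner_right]

variable {E₁ E₂ F : Type*}
  [NormedAddCommGroup E₁] [InnerProductSpace ℝ E₁] [FiniteDimensional ℝ E₁]
  [MeasurableSpace E₁] [BorelSpace E₁]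
  [NormedAddCommGroup E₂] [InnerProductSpace ℝ E₂] [FiniteDimensional ℝ E₂]
  [MeasurableSpace E₂] [BorelSpace E₂]
  [NormedAddCommGroup F] [InnerProductSpace ℝ F] [FiniteDimensional ℝ F]
  [MeasurableSpace F] [BorelSpace F]

lemma charFun_map_stdGaussian (L : E₁ →L[ℝ] F) (t : F) :
    charFun ((stdGaussian E₁).map L) t = cexp (-‖adjoint L t‖ ^ 2 / 2) := by
  rw [charFun_map_continuousLinearMap, charFun_stdGaussian]

lemma map_add_prod_stdGaussian (L₁ : E₁ →L[ℝ] F) (L₂ : E₂ →L[ℝ] F)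
    (h : L₁ ∘L adjoint L₁ + L₂ ∘L adjoint L₂ = 1) :
    ((stdGaussian E₁).prod (stdGaussian E₂)).map (fun p => L₁ p.1 + L₂ p.2) = stdGaussian F := by
  have hsplit : (fun p : E₁ × E₂ => L₁ p.1 + L₂ p.2) =
      (fun q : F × F => q.1 + q.2) ∘ Prod.map L₁ L₂ := rfl
  rw [hsplit, ← Measure.map_map (by fun_prop) (by fun_prop),
    ← Measure.map_prod_map _ _ (by fun_prop) (by fun_prop)]
  refine Measure.ext_of_charFun (funext fun t => ?_)
  have hnorm : ‖adjoint L₁ t‖ ^ 2 + ‖adjoint L₂ t‖ ^ 2 = ‖t‖ ^ 2 := by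
    rw [apply_norm_sq_eq_inner_adjoint_right, apply_norm_sq_eq_inner_adjoint_right,
      adjoint_adjoint, adjoint_adjoint, RCLike.re_to_real, RCLike.re_to_real, ← inner_add_right,
      ← _root_.add_apply, h, one_apply_eq_self, real_inner_self_eq_norm_sq]
  have hnormC : (‖adjoint L₁ t‖ : ℂ) ^ 2 + (‖adjoint L₂ t‖ : ℂ) ^ 2 = (‖t‖ : ℂ) ^ 2 :=
    mod_cast hnorm
  rw [charFun_map_add_prod_eq_mul, Pi.mul_apply, charFun_map_stdGaussian, charFun_map_stdGaussian,
    charFun_stdGaussian, ← Complex.exp_add]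
  congr 1
  linear_combination (-1 / 2 : ℂ) * hnormC

end Gaussian

section Euclidean

variable {ι : Type*} [Fintype ι]

lemma map_ofLp_stdGaussian :
    (stdGaussian (EuclideanSpace ℝ ι)).map ofLp = Measure.pi fun _ : ι => gaussianReal 0 1 := by
  rw [← map_pi_eq_stdGaussian, Measure.map_map (by fun_prop) (by fun_prop)]
  exact Measure.map_id

lemma EuclideanSpace.norm_sq_toLp_eq_dotProduct (x : ι → ℝ) : ‖toLp 2 x‖ ^ 2 = x ⬝ᵥ x := by
  rw [← real_inner_self_eq_norm_sq, EuclideanSpace.inner_eq_star_dotProduct, star_trivial]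

variable [DecidableEq ι]

namespace Matrix

lemma adjoint_toEuclideanCLM (A : Matrix ι ι ℝ) :
    adjoint (toEuclideanCLM (𝕜 := ℝ) A) = toEuclideanCLM (𝕜 := ℝ) Aᵀ := by
  rw [← star_eq_adjoint, ← map_star, star_eq_conjTranspose, conjTranspose_eq_transpose_of_trivial]

lemma norm_toEuclideanCLM_transpose (A : Matrix ι ι ℝ) :
    ‖toEuclideanCLM (𝕜 := ℝ) Aᵀ‖ = ‖toEuclideanCLM (𝕜 := ℝ) A‖ := by
  rw [← adjoint_toEuclideanCLM, LinearIsometryEquiv.norm_map]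

lemma norm_toEuclideanCLM_le_one {A : Matrix ι ι ℝ}
    (hA : ∀ x : ι → ℝ, ∑ i, (A *ᵥ x) i ^ 2 ≤ ∑ i, x i ^ 2) :
    ‖toEuclideanCLM (𝕜 := ℝ) A‖ ≤ 1 := by
  refine opNorm_le_bound _ zero_le_one fun x => ?_
  rw [one_mul, ← sq_le_sq₀ (norm_nonneg _) (norm_nonneg _), EuclideanSpace.real_norm_sq_eq,
    EuclideanSpace.real_norm_sq_eq]
  exact hA x.ofLp

lemma posSemidef_one_sub_mul_transpose {A : Matrix ι ι ℝ}
    (hA : ‖toEuclideanCLM (𝕜 := ℝ) A‖ ≤ 1) : (1 - A * Aᵀ).PosSemidef := by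
  refine PosSemidef.of_dotProduct_mulVec_nonneg ?_ fun x => ?_
  · simpa using isHermitian_one.sub (isHermitian_mul_conjTranspose_self A)
  · have hx : ‖toEuclideanCLM (𝕜 := ℝ) Aᵀ (toLp 2 x)‖ ≤ ‖toLp 2 x‖ := by
      refine (le_opNorm _ _).trans ?_
      rw [norm_toEuclideanCLM_transpose]
      exact mul_le_of_le_one_left (norm_nonneg _) hA
    rw [toEuclideanCLM_toLp] at hx
    have hsq := pow_le_pow_left₀ (norm_nonneg _) hx 2
    rw [EuclideanSpace.norm_sq_toLp_eq_dotProduct, EuclideanSpace.norm_sq_toLp_eq_dotProduct] at hsq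
    rwa [star_trivial, sub_mulVec, one_mulVec, dotProduct_sub, ← mulVec_mulVec, dotProduct_mulVec,
      ← mulVec_transpose, sub_nonneg]

open scoped MatrixOrder in
lemma exists_mul_transpose_add_mul_transpose_eq_one {A : Matrix ι ι ℝ}
    (hA : ‖toEuclideanCLM (𝕜 := ℝ) A‖ ≤ 1) : ∃ B : Matrix ι ι ℝ, A * Aᵀ + B * Bᵀ = 1 := by
  have hpos := posSemidef_one_sub_mul_transpose hA
  refine ⟨CFC.sqrt (1 - A * Aᵀ), ?_⟩
  rw [← conjTranspose_eq_transpose_of_trivial (CFC.sqrt _),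
    (CFC.sqrt_nonneg _).posSemidef.isHermitian.eq, CFC.sqrt_mul_sqrt_self _ hpos.nonneg,
    add_sub_cancel]

end Matrix

lemma map_mulVec_add_mulVec_prod_pi_gaussianReal {A B : Matrix ι ι ℝ}
    (hAB : A * Aᵀ + B * Bᵀ = 1) :
    ((Measure.pi fun _ : ι => gaussianReal 0 1).prod (Measure.pi fun _ : ι => gaussianReal 0 1)).map
      (fun p => A *ᵥ p.1 + B *ᵥ p.2) = Measure.pi fun _ : ι => gaussianReal 0 1 := by
  have hsum : toEuclideanCLM (𝕜 := ℝ) A ∘L adjoint (toEuclideanCLM (𝕜 := ℝ) A) +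
      toEuclideanCLM (𝕜 := ℝ) B ∘L adjoint (toEuclideanCLM (𝕜 := ℝ) B) = 1 := by
    rw [adjoint_toEuclideanCLM, adjoint_toEuclideanCLM, ← mul_def, ← mul_def, ← map_mul, ← map_mul,
      ← map_add, hAB, map_one]
  have hcomp : (fun p : (ι → ℝ) × (ι → ℝ) => A *ᵥ p.1 + B *ᵥ p.2) ∘ Prod.map ofLp ofLp =
      ofLp ∘ fun q : EuclideanSpace ℝ ι × EuclideanSpace ℝ ι =>
        toEuclideanCLM (𝕜 := ℝ) A q.1 + toEuclideanCLM (𝕜 := ℝ) B q.2 := by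
    funext q
    simp
  rw [← map_ofLp_stdGaussian, Measure.map_prod_map _ _ (by fun_prop) (by fun_prop),
    Measure.map_map (by fun_prop) (by fun_prop), hcomp,
    ← Measure.map_map (by fun_prop) (by fun_prop), map_add_prod_stdGaussian _ _ hsum]

end Euclidean

instance (n : ℕ) : IsProbabilityMeasure (stdGaussian n) := by
  unfold _root_.stdGaussian
  infer_instance

/-- If `G` is a standard Gaussian random vector in `ℝⁿ` and `A` is an `n × n` matrix with
(Euclidean) operator norm at most `1`, then `A G` has the same distribution as `(X+Y)/2` for
two standard Gaussian random vectors `X, Y` defined on a common probability space. -/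
theorem matrix_apply_gaussian_eq_average_of_two_std_gaussians (n : ℕ)
    (A : Matrix (Fin n) (Fin n) ℝ)
    (hA : ∀ x : Fin n → ℝ, ∑ i, (A.mulVec x i) ^ 2 ≤ ∑ i, (x i) ^ 2) :
    ∃ (Ω : Type) (_ : MeasurableSpace Ω) (μ : Measure Ω) (_ : IsProbabilityMeasure μ)
      (X Y : Ω → Fin n → ℝ), Measurable X ∧ Measurable Y ∧
      μ.map X = stdGaussian n ∧ μ.map Y = stdGaussian n ∧
      μ.map (fun ω => (2 : ℝ)⁻¹ • (X ω + Y ω)) = (stdGaussian n).map A.mulVec := by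
  obtain ⟨B, hAB⟩ := exists_mul_transpose_add_mul_transpose_eq_one (norm_toEuclideanCLM_le_one hA)
  have hAB' : A * Aᵀ + (-B) * (-B)ᵀ = 1 := by rwa [transpose_neg, neg_mul_neg]
  refine ⟨(Fin n → ℝ) × (Fin n → ℝ), inferInstance, (stdGaussian n).prod (stdGaussian n),
    inferInstance, fun p => A *ᵥ p.1 + B *ᵥ p.2, fun p => A *ᵥ p.1 + (-B) *ᵥ p.2, by fun_prop,
    by fun_prop, map_mulVec_add_mulVec_prod_pi_gaussianReal hAB,
    map_mulVec_add_mulVec_prod_pi_gaussianReal hAB', ?_⟩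
  have havg : (fun p : (Fin n → ℝ) × (Fin n → ℝ) =>
      (2 : ℝ)⁻¹ • (A *ᵥ p.1 + B *ᵥ p.2 + (A *ᵥ p.1 + (-B) *ᵥ p.2))) = A.mulVec ∘ Prod.fst := by
    funext p
    simp only [neg_mulVec, Function.comp_apply]
    module
  rw [havg, ← Measure.map_map (by fun_prop) measurable_fst, Measure.map_fst_prod, measure_univ,
    one_smul]
end

section
/- There exists a constant δ > 0 such that for every dimension n ≥ 1 and every closed set A ⊆ ℝⁿ with standard Gaussian measure γₙ(A) ≥ 2/3, the Minkowski sum A + A contains the closed Euclidean ball of radius δ centered at the origin. -/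
/-!
Let `γ` be the standard Gaussian measure and `‖x‖ ≤ 1/2`. By the Cameron–Martin formula the law
of `x - Y`, `Y ∼ γ`, has density `ρ y = exp (⟪x, y⟫ - ‖x‖² / 2)` with respect to `γ`, and
`∫ ρ² dγ = exp ‖x‖² ≤ exp (1/4)`. By Cauchy–Schwarz this law gives `Aᶜ` mass at most
`(exp (1/4) γ(Aᶜ))^{1/2} < 2/3`, so `γ(x - A) > 1/3`. Together with `γ(A) ≥ 2/3` this forces
`A ∩ (x - A) ≠ ∅`, i.e. `x ∈ A + A`.
-/

open MeasureTheory ProbabilityTheory Pointwise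

/-- The standard Gaussian measure on the Euclidean space `ℝⁿ`. -/
noncomputable def stdGaussianE (n : ℕ) : Measure (EuclideanSpace ℝ (Fin n)) :=
  (Measure.pi fun _ : Fin n => gaussianReal 0 1).map (EuclideanSpace.equiv (Fin n) ℝ).symm

open scoped ENNReal

section Pi

variable {ι : Type*} [Fintype ι] {α : ι → Type*} [∀ i, MeasurableSpace (α i)]

theorem lintegral_pi_prod_eq_prod (μ : ∀ i, Measure (α i)) [∀ i, IsProbabilityMeasure (μ i)]
    {f : ∀ i, α i → ℝ≥0∞} (hf : ∀ i, Measurable (f i)) :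
    ∫⁻ x, ∏ i, f i (x i) ∂Measure.pi μ = ∏ i, ∫⁻ t, f i t ∂μ i := by
  rw [lintegral_prod_eq_prod_lintegral_of_indepFun _ _
    (iIndepFun_pi fun i => (hf i).aemeasurable) fun i => (hf i).comp (measurable_pi_apply i)]
  exact Finset.prod_congr rfl fun i _ => (measurePreserving_eval μ i).lintegral_comp (hf i)

theorem Measure.pi_eq_withDensity_prod (μ ν : ∀ i, Measure (α i))
    [∀ i, IsProbabilityMeasure (μ i)] [∀ i, SigmaFinite (ν i)]
    {f : ∀ i, α i → ℝ≥0∞} (hf : ∀ i, Measurable (f i)) (hν : ∀ i, ν i = (μ i).withDensity (f i)) :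
    Measure.pi ν = (Measure.pi μ).withDensity fun x => ∏ i, f i (x i) := by
  refine Measure.pi_eq fun s hs => ?_
  have hbox : (Set.univ.pi s).indicator (fun x => ∏ i, f i (x i)) =
      fun x => ∏ i, (s i).indicator (f i) (x i) := by
    ext x
    by_cases h : x ∈ Set.univ.pi s
    · rw [Set.indicator_of_mem h]
      exact Finset.prod_congr rfl fun i _ => (Set.indicator_of_mem (h i (Set.mem_univ i)) _).symm
    · obtain ⟨i, -, hi⟩ := not_forall₂.mp h
      rw [Set.indicator_of_notMem h]
      exact (Finset.prod_eq_zero (Finset.mem_univ i) (Set.indicator_of_notMem hi _)).symm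
  rw [withDensity_apply _ (MeasurableSet.univ_pi hs), ← lintegral_indicator (.univ_pi hs), hbox,
    lintegral_pi_prod_eq_prod μ fun i => (hf i).indicator (hs i)]
  exact Finset.prod_congr rfl fun i _ => by
    rw [hν, withDensity_apply _ (hs i), lintegral_indicator (hs i)]

end Pi

theorem gaussianReal_eq_withDensity_gaussianReal_zero (c : ℝ) :
    gaussianReal c 1 =
      (gaussianReal 0 1).withDensity fun t => ENNReal.ofReal (Real.exp (c * t - c ^ 2 / 2)) := by
  rw [gaussianReal_of_var_ne_zero c one_ne_zero, gaussianReal_of_var_ne_zero 0 one_ne_zero,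
    ← withDensity_mul _ (measurable_gaussianPDF 0 1) (by fun_prop)]
  congr 1
  ext t
  rw [Pi.mul_apply, gaussianPDF, gaussianPDF, ← ENNReal.ofReal_mul (gaussianPDFReal_nonneg 0 1 t)]
  simp only [gaussianPDFReal, NNReal.coe_one, mul_assoc, ← Real.exp_add]
  ring_nf

section StdGaussianPi

variable {ι : Type*} [Fintype ι]

variable (ι) in
noncomputable abbrev stdGaussianPi : Measure (ι → ℝ) :=
  Measure.pi fun _ : ι => gaussianReal 0 1

noncomputable def gaussianShiftDensity (x y : ι → ℝ) : ℝ≥0∞ :=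
  ENNReal.ofReal (Real.exp (x ⬝ᵥ y - x ⬝ᵥ x / 2))

@[fun_prop]
theorem measurable_gaussianShiftDensity (x : ι → ℝ) : Measurable (gaussianShiftDensity x) := by
  unfold gaussianShiftDensity dotProduct
  fun_prop

theorem map_const_sub_stdGaussianPi (x : ι → ℝ) :
    (stdGaussianPi ι).map (x - ·) = (stdGaussianPi ι).withDensity (gaussianShiftDensity x) := by
  have hshift : (stdGaussianPi ι).map (x - ·) = Measure.pi fun i => gaussianReal (x i) 1 :=
    (measurePreserving_pi _ _ fun i =>
      ⟨measurable_const_sub (x i), by rw [gaussianReal_map_const_sub, sub_zero]⟩).map_eq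
  have hprod (y : ι → ℝ) : ∏ i, ENNReal.ofReal (Real.exp (x i * y i - x i ^ 2 / 2)) =
      gaussianShiftDensity x y := by
    rw [← ENNReal.ofReal_prod_of_nonneg fun i _ => (Real.exp_pos _).le, ← Real.exp_sum,
      Finset.sum_sub_distrib, ← Finset.sum_div]
    simp only [gaussianShiftDensity, dotProduct, sq]
  rw [hshift, Measure.pi_eq_withDensity_prod _ _ (fun _ => by fun_prop)
    fun i => gaussianReal_eq_withDensity_gaussianReal_zero (x i)]
  simp only [hprod]

theorem lintegral_gaussianShiftDensity (x : ι → ℝ) :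
    ∫⁻ y, gaussianShiftDensity x y ∂stdGaussianPi ι = 1 := by
  rw [← setLIntegral_univ, ← withDensity_apply _ .univ, ← map_const_sub_stdGaussianPi,
    Measure.map_apply (by fun_prop) .univ, Set.preimage_univ, measure_univ]

theorem gaussianShiftDensity_sq (x y : ι → ℝ) :
    gaussianShiftDensity x y ^ 2 =
      ENNReal.ofReal (Real.exp (x ⬝ᵥ x)) * gaussianShiftDensity (2 • x) y := by
  simp only [gaussianShiftDensity, ← ENNReal.ofReal_pow (Real.exp_pos _).le,
    ← ENNReal.ofReal_mul (Real.exp_pos _).le, ← Real.exp_nat_mul, ← Real.exp_add,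
    smul_dotProduct, dotProduct_smul]
  ring_nf

theorem lintegral_gaussianShiftDensity_sq (x : ι → ℝ) :
    ∫⁻ y, gaussianShiftDensity x y ^ 2 ∂stdGaussianPi ι = ENNReal.ofReal (Real.exp (x ⬝ᵥ x)) := by
  simp only [gaussianShiftDensity_sq]
  rw [lintegral_const_mul _ (by fun_prop), lintegral_gaussianShiftDensity, mul_one]

end StdGaussianPi

theorem withDensity_apply_sq_le {α : Type*} [MeasurableSpace α] (μ : Measure α) {ρ : α → ℝ≥0∞}
    (hρ : AEMeasurable ρ μ) {s : Set α} (hs : MeasurableSet s) :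
    μ.withDensity ρ s ^ 2 ≤ (∫⁻ a, ρ a ^ 2 ∂μ) * μ s := by
  have hCS := ENNReal.lintegral_mul_le_Lp_mul_Lq (μ.restrict s) .two_two hρ.restrict
    aemeasurable_const (g := 1)
  simp only [Pi.mul_apply, Pi.one_apply, mul_one, ENNReal.rpow_two, one_pow, lintegral_one,
    Measure.restrict_apply_univ] at hCS
  calc μ.withDensity ρ s ^ 2
      ≤ ((∫⁻ a in s, ρ a ^ 2 ∂μ) ^ (1 / 2 : ℝ) * μ s ^ (1 / 2 : ℝ)) ^ 2 := by
        rw [withDensity_apply _ hs]; gcongr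
    _ = (∫⁻ a in s, ρ a ^ 2 ∂μ) * μ s := by
      rw [mul_pow, ← ENNReal.rpow_natCast, ← ENNReal.rpow_natCast, ← ENNReal.rpow_mul,
        ← ENNReal.rpow_mul]
      norm_num
    _ ≤ (∫⁻ a, ρ a ^ 2 ∂μ) * μ s := mul_le_mul_left (setLIntegral_le_lintegral s _) _

theorem exp_quarter_lt_four_thirds : Real.exp (1 / 4) < 4 / 3 := by
  have := Real.exp_bound_div_one_sub_of_interval' (x := 1 / 4) (by norm_num) (by norm_num)
  norm_num at this ⊢
  linarith

theorem mem_add_self_of_two_thirds_le_stdGaussianPi {ι : Type*} [Fintype ι] {x : ι → ℝ}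
    (hx : x ⬝ᵥ x ≤ 1 / 4) {B : Set (ι → ℝ)} (hB : MeasurableSet B)
    (hγB : 2 / 3 ≤ stdGaussianPi ι B) : x ∈ B + B := by
  set γ := stdGaussianPi ι
  set ν := γ.map (x - ·)
  have : IsProbabilityMeasure ν := Measure.isProbabilityMeasure_map (by fun_prop)
  have hγB' : 2 / 3 ≤ γ.real B := by
    have := ENNReal.toReal_mono (by finiteness) hγB
    rwa [ENNReal.toReal_div] at this
  have hνBc : ν.real Bᶜ < 2 / 3 := by
    have hCS := withDensity_apply_sq_le γ (measurable_gaussianShiftDensity x).aemeasurable hB.compl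
    rw [← map_const_sub_stdGaussianPi, lintegral_gaussianShiftDensity_sq] at hCS
    have hCS' := ENNReal.toReal_mono (by finiteness) hCS
    rw [ENNReal.toReal_pow, ENNReal.toReal_mul, ENNReal.toReal_ofReal (Real.exp_pos _).le] at hCS'
    change ν.real Bᶜ ^ 2 ≤ Real.exp (x ⬝ᵥ x) * γ.real Bᶜ at hCS'
    have hγBc : γ.real Bᶜ ≤ 1 / 3 := by
      rw [probReal_compl_eq_one_sub hB]; linarith
    have hexp : Real.exp (x ⬝ᵥ x) < 4 / 3 := (Real.exp_le_exp.mpr hx).trans_lt exp_quarter_lt_four_thirds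
    have h49 := mul_le_mul_of_nonneg_left hγBc (Real.exp_pos (x ⬝ᵥ x)).le
    nlinarith [measureReal_nonneg (μ := ν) (s := Bᶜ)]
  have hγC : γ.real ((x - ·) ⁻¹' B) = ν.real B := by
    rw [map_measureReal_apply (by fun_prop) hB]
  obtain ⟨z, hzB, hzC⟩ := nonempty_inter_of_measureReal_lt_add (μ := γ)
    (measurable_const_sub x hB) (Set.subset_univ B) (Set.subset_univ _)
    (by rw [probReal_univ, hγC]; linarith [probReal_compl_eq_one_sub (μ := ν) hB])
  exact ⟨z, hzB, x - z, hzC, add_sub_cancel z x⟩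

/-- Steinhaus lemma: there is a universal `δ > 0` such that for every `n ≥ 1` and every closed
set `A ⊆ ℝⁿ` of standard Gaussian measure at least `2/3`, the Minkowski sum `A + A` contains the
closed Euclidean ball of radius `δ` centered at the origin. -/
theorem steinhaus_lemma :
    ∃ δ : ℝ, 0 < δ ∧ ∀ n : ℕ, 1 ≤ n → ∀ A : Set (EuclideanSpace ℝ (Fin n)),
      IsClosed A → 2 / 3 ≤ stdGaussianE n A →
      Metric.closedBall 0 δ ⊆ A + A := by
  refine ⟨1 / 2, by norm_num, fun n _ A hA hγA w hw => ?_⟩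
  set e := EuclideanSpace.equiv (Fin n) ℝ
  have he : Measurable e.symm := e.symm.continuous.measurable
  have hw' : e w ⬝ᵥ e w ≤ 1 / 4 := by
    have hnorm : ‖w‖ ≤ 1 / 2 := by simpa using hw
    have hsq : e w ⬝ᵥ e w = ‖w‖ ^ 2 := by
      rw [EuclideanSpace.real_norm_sq_eq]
      simp [dotProduct, sq, e]
    nlinarith [norm_nonneg w]
  obtain ⟨a, ha, b, hb, hab : a + b = e w⟩ := mem_add_self_of_two_thirds_le_stdGaussianPi hw'
    (he hA.measurableSet) (by rwa [stdGaussianE, Measure.map_apply he hA.measurableSet] at hγA)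
  exact ⟨e.symm a, ha, e.symm b, hb, by
    change e.symm a + e.symm b = w
    rw [← map_add, hab, e.symm_apply_apply]⟩
end

section
/- Let q ≥ 3 be an integer and let τ₁, τ₂, τ₃ ∈ (0, 1/√2). Given any standard Gaussian random vectors G₁, G₂, G₃ in ℝⁿ, the random vector τ₁G₁ + τ₂G₂ + τ₃G₃ has the same distribution as a sum H₁ + H₂ + H₃ of three standard Gaussian random vectors in ℝⁿ (with some coupling). -/
open MeasureTheory ProbabilityTheory

open scoped NNReal

namespace MeasureTheory.Measure

lemma map_conv_map {α β M : Type*} [MeasurableSpace α] [MeasurableSpace β] [AddMonoid M]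
    [MeasurableSpace M] [MeasurableAdd₂ M] {μ : Measure α} {ν : Measure β} [SFinite μ]
    [SFinite ν] {f : α → M} {g : β → M} (hf : Measurable f) (hg : Measurable g) :
    μ.map f ∗ ν.map g = (μ.prod ν).map (fun p => f p.1 + g p.2) := by
  rw [conv, map_prod_map _ _ hf hg, map_map (by fun_prop) (hf.prodMap hg)]
  rfl

lemma pi_conv_pi {ι M : Type*} [Fintype ι] [AddMonoid M] [MeasurableSpace M] [MeasurableAdd₂ M]
    (μ ν : ι → Measure M) [∀ i, IsFiniteMeasure (μ i)] [∀ i, IsFiniteMeasure (ν i)] :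
    Measure.pi μ ∗ Measure.pi ν = Measure.pi fun i => μ i ∗ ν i := by
  have e := measurePreserving_arrowProdEquivProdArrow M M ι μ ν
  rw [conv, ← e.map_eq, map_map (by fun_prop) e.measurable]
  exact pi_map_pi fun i => (measurable_fst.add measurable_snd).aemeasurable

end MeasureTheory.Measure

namespace Complex

-- `h` is Heron's `16 · area² ≥ 0` for the triangle with squared side lengths `sᵢ`.
lemma exists_add_add_eq_zero_normSq {s₁ s₂ s₃ : ℝ} (h₁ : 0 < s₁)
    (h : (s₃ - s₁ - s₂) ^ 2 ≤ 4 * s₁ * s₂) :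
    ∃ z₁ z₂ z₃ : ℂ, z₁ + z₂ + z₃ = 0 ∧ normSq z₁ = s₁ ∧ normSq z₂ = s₂ ∧ normSq z₃ = s₃ := by
  obtain ⟨a, ha, ha2⟩ : ∃ a : ℝ, 0 < a ∧ a ^ 2 = s₁ :=
    ⟨√s₁, Real.sqrt_pos.mpr h₁, Real.sq_sqrt h₁.le⟩
  obtain ⟨b, hab⟩ : ∃ b : ℝ, 2 * a * b = s₃ - s₁ - s₂ :=
    ⟨(s₃ - s₁ - s₂) / (2 * a), by field_simp⟩
  have hb2 : b ^ 2 ≤ s₂ := by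
    refine le_of_mul_le_mul_left ?_ (by positivity : 0 < (2 * a) ^ 2)
    calc (2 * a) ^ 2 * b ^ 2 = (s₃ - s₁ - s₂) ^ 2 := by rw [← hab]; ring
      _ ≤ 4 * s₁ * s₂ := h
      _ = (2 * a) ^ 2 * s₂ := by rw [← ha2]; ring
  obtain ⟨c, hc2⟩ : ∃ c : ℝ, c ^ 2 = s₂ - b ^ 2 := ⟨√(s₂ - b ^ 2), Real.sq_sqrt (by linarith)⟩
  refine ⟨a, ⟨b, c⟩, -(a + ⟨b, c⟩), by ring, ?_, ?_, ?_⟩ <;>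
    simp only [normSq_apply, ofReal_re, ofReal_im, add_re, add_im, neg_re, neg_im]
  · linear_combination ha2
  · linear_combination hc2
  · linear_combination ha2 + hc2 + hab

end Complex

namespace ProbabilityTheory

noncomputable def gaussianPi (ι : Type*) [Fintype ι] (v : ℝ≥0) : Measure (ι → ℝ) :=
  Measure.pi fun _ => gaussianReal 0 v

variable {ι : Type*} [Fintype ι]

instance isProbabilityMeasure_gaussianPi (v : ℝ≥0) : IsProbabilityMeasure (gaussianPi ι v) := by
  unfold gaussianPi; infer_instance

lemma gaussianPi_map_const_smul (c : ℝ) (v : ℝ≥0) :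
    (gaussianPi ι v).map (c • ·) = gaussianPi ι (⟨c ^ 2, sq_nonneg c⟩ * v) := by
  have h := Measure.pi_map_pi (μ := fun _ : ι => gaussianReal 0 v) (f := fun _ => (c * ·))
    fun _ => (measurable_const_mul c).aemeasurable
  simp only [gaussianReal_map_const_mul, mul_zero] at h
  exact h

lemma gaussianPi_conv_gaussianPi (v w : ℝ≥0) :
    gaussianPi ι v ∗ gaussianPi ι w = gaussianPi ι (v + w) := by
  rw [gaussianPi, gaussianPi, Measure.pi_conv_pi, gaussianPi]
  simp only [gaussianReal_conv_gaussianReal, add_zero]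

section Noise

variable {Ω E : Type*} [AddCommGroup E] [Module ℝ E]

def withNoise (X : Ω → E) (t : ℝ) (z : ℂ) : Ω × (E × E) → E :=
  fun ω => t • X ω.1 + (z.re • ω.2.1 + z.im • ω.2.2)

lemma measurable_withNoise [MeasurableSpace Ω] [MeasurableSpace E] [MeasurableAdd₂ E]
    [MeasurableConstSMul ℝ E] {X : Ω → E} (hX : Measurable X) (t : ℝ) (z : ℂ) :
    Measurable (withNoise X t z) := by
  unfold withNoise; fun_prop

lemma withNoise_add_add {X₁ X₂ X₃ : Ω → E} {t₁ t₂ t₃ : ℝ} {z₁ z₂ z₃ : ℂ}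
    (hz : z₁ + z₂ + z₃ = 0) (ω : Ω × (E × E)) :
    withNoise X₁ t₁ z₁ ω + withNoise X₂ t₂ z₂ ω + withNoise X₃ t₃ z₃ ω
      = t₁ • X₁ ω.1 + t₂ • X₂ ω.1 + t₃ • X₃ ω.1 := by
  have hre : z₁.re + z₂.re + z₃.re = 0 := by simpa using congrArg Complex.re hz
  have him : z₁.im + z₂.im + z₃.im = 0 := by simpa using congrArg Complex.im hz
  simp only [withNoise]
  linear_combination (norm := module) hre • ω.2.1 + him • ω.2.2

lemma map_withNoise [MeasurableSpace Ω] {μ : Measure Ω} [IsProbabilityMeasure μ]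
    {X : Ω → ι → ℝ} (hX : Measurable X) (hXlaw : μ.map X = gaussianPi ι 1) {t : ℝ} {z : ℂ}
    (htz : t ^ 2 + Complex.normSq z = 1) :
    (μ.prod ((gaussianPi ι 1).prod (gaussianPi ι 1))).map (withNoise X t z) = gaussianPi ι 1 := by
  set γ := gaussianPi ι 1
  calc (μ.prod (γ.prod γ)).map (withNoise X t z)
      = μ.map (fun ω => t • X ω) ∗ (γ.prod γ).map (fun p => z.re • p.1 + z.im • p.2) :=
        (Measure.map_conv_map (hX.const_smul t)
          ((measurable_fst.const_smul z.re).add (measurable_snd.const_smul z.im))).symm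
    _ = (μ.map X).map (t • ·) ∗ (γ.map (z.re • ·) ∗ γ.map (z.im • ·)) := by
        congr 1
        · exact (Measure.map_map (measurable_const_smul t) hX).symm
        · exact (Measure.map_conv_map (measurable_const_smul _) (measurable_const_smul _)).symm
    _ = γ := by
        rw [hXlaw]
        simp only [γ, gaussianPi_map_const_smul, gaussianPi_conv_gaussianPi]
        congr
        rw [← NNReal.coe_inj]
        change t ^ 2 * 1 + (z.re ^ 2 * 1 + z.im ^ 2 * 1) = 1
        rw [Complex.normSq_apply] at htz
        linear_combination htz

end Noise

end ProbabilityTheory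

lemma stdGaussian_eq_gaussianPi (n : ℕ) : stdGaussian n = gaussianPi (Fin n) 1 := rfl

/-- Given `τ₁, τ₂, τ₃ ∈ (0, 1/√2)` and standard Gaussian random vectors `G₁, G₂, G₃` in `ℝⁿ`,
the random vector `τ₁G₁ + τ₂G₂ + τ₃G₃` has the same distribution as the sum `H₁ + H₂ + H₃`
of three standard Gaussian random vectors (for some coupling). -/
theorem scaled_sum_of_three_gaussians_eq_sum_of_three_std_gaussians (n : ℕ)
    (τ1 τ2 τ3 : ℝ)
    (h1 : τ1 ∈ Set.Ioo 0 (Real.sqrt 2)⁻¹) (h2 : τ2 ∈ Set.Ioo 0 (Real.sqrt 2)⁻¹)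
    (h3 : τ3 ∈ Set.Ioo 0 (Real.sqrt 2)⁻¹)
    (Ω : Type) [MeasurableSpace Ω] (μ : Measure Ω) [IsProbabilityMeasure μ]
    (G1 G2 G3 : Ω → Fin n → ℝ)
    (hG1m : Measurable G1) (hG2m : Measurable G2) (hG3m : Measurable G3)
    (hG1 : μ.map G1 = stdGaussian n) (hG2 : μ.map G2 = stdGaussian n)
    (hG3 : μ.map G3 = stdGaussian n) :
    ∃ (Ω' : Type) (_ : MeasurableSpace Ω') (μ' : Measure Ω') (_ : IsProbabilityMeasure μ')
      (H1 H2 H3 : Ω' → Fin n → ℝ), Measurable H1 ∧ Measurable H2 ∧ Measurable H3 ∧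
      μ'.map H1 = stdGaussian n ∧ μ'.map H2 = stdGaussian n ∧ μ'.map H3 = stdGaussian n ∧
      μ'.map (fun ω => H1 ω + H2 ω + H3 ω) =
        μ.map (fun ω => τ1 • G1 ω + τ2 • G2 ω + τ3 • G3 ω) := by
  have sq_lt_half : ∀ τ ∈ Set.Ioo (0 : ℝ) (√2)⁻¹, τ ^ 2 < 1 / 2 := by
    rintro τ ⟨hτ₀, hτ⟩
    calc τ ^ 2 < ((√2)⁻¹) ^ 2 := by gcongr
      _ = 1 / 2 := by rw [inv_pow, Real.sq_sqrt zero_le_two, one_div]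
  have hτ1 := sq_lt_half τ1 h1
  have hτ2 := sq_lt_half τ2 h2
  have hτ3 := sq_lt_half τ3 h3
  obtain ⟨z₁, z₂, z₃, hz, hz₁, hz₂, hz₃⟩ :=
    Complex.exists_add_add_eq_zero_normSq (s₁ := 1 - τ1 ^ 2) (s₂ := 1 - τ2 ^ 2)
      (s₃ := 1 - τ3 ^ 2) (by linarith) (by nlinarith [sq_nonneg τ1, sq_nonneg τ2, sq_nonneg τ3])
  rw [stdGaussian_eq_gaussianPi] at hG1 hG2 hG3 ⊢
  set γ := gaussianPi (Fin n) 1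
  refine ⟨Ω × ((Fin n → ℝ) × (Fin n → ℝ)), inferInstance, μ.prod (γ.prod γ), inferInstance,
    withNoise G1 τ1 z₁, withNoise G2 τ2 z₂, withNoise G3 τ3 z₃,
    measurable_withNoise hG1m _ _, measurable_withNoise hG2m _ _, measurable_withNoise hG3m _ _,
    map_withNoise hG1m hG1 (by linarith), map_withNoise hG2m hG2 (by linarith),
    map_withNoise hG3m hG3 (by linarith), ?_⟩
  simp_rw [withNoise_add_add hz]
  calc _ = ((μ.prod (γ.prod γ)).map Prod.fst).map (fun ω => τ1 • G1 ω + τ2 • G2 ω + τ3 • G3 ω) :=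
        (Measure.map_map (by fun_prop) measurable_fst).symm
    _ = _ := by rw [Measure.map_fst_prod, measure_univ, one_smul]
end

section
/- Let X be a random vector in ℝⁿ which is a sum of q standard Gaussian random vectors. For any τ > 0, the rescaled vector τX is a sum of (⌊τ⌋ + 2)q standard Gaussian random vectors. -/
open MeasureTheory ProbabilityTheory

/-- A probability distribution `ν` on `ℝⁿ` is a sum of `q` standard Gaussian random vectors if
there exist `q` (not necessarily independent) standard Gaussian random vectors on a common
probability space whose sum has distribution `ν`. -/
def IsSumOfGaussians (n q : ℕ) (ν : Measure (Fin n → ℝ)) : Prop :=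
  ∃ (Ω : Type) (_ : MeasurableSpace Ω) (μ : Measure Ω) (_ : IsProbabilityMeasure μ)
    (G : Fin q → Ω → Fin n → ℝ), (∀ i, Measurable (G i)) ∧
    (∀ i, μ.map (G i) = stdGaussian n) ∧
    μ.map (fun ω => ∑ i, G i ω) = ν

/-! Given `X = G₁ + ⋯ + G_q`, adjoin a standard Gaussian `Z` independent of the `Gᵢ`. Whenever
`aⱼ² + bⱼ² = 1`, each `aⱼ • Gᵢ + bⱼ • Z` is again standard Gaussian, and summing over all `i, j`
gives `(∑ aⱼ) • X + q (∑ bⱼ) • Z`. With `δ = τ - ⌊τ⌋`, the `⌊τ⌋` pairs `(1, 0)` together with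
`(δ/2, ±√(1 - δ²/4))` make the `Z`-terms cancel and leave `τ • X`. -/

instance isProbabilityMeasure_stdGaussian (n : ℕ) : IsProbabilityMeasure (stdGaussian n) := by
  unfold _root_.stdGaussian; infer_instance

lemma gaussianReal_prod_map_linearComb {a b : ℝ} (hab : a ^ 2 + b ^ 2 = 1) :
    ((gaussianReal 0 1).prod (gaussianReal 0 1)).map (fun p : ℝ × ℝ => a * p.1 + b * p.2)
      = gaussianReal 0 1 := by
  have hcomp : (fun p : ℝ × ℝ => a * p.1 + b * p.2)
      = (fun p : ℝ × ℝ => p.1 + p.2) ∘ Prod.map (a * ·) (b * ·) := rfl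
  rw [hcomp, ← Measure.map_map measurable_add (by fun_prop),
    ← Measure.map_prod_map _ _ (measurable_const_mul a) (measurable_const_mul b),
    gaussianReal_map_const_mul, gaussianReal_map_const_mul]
  change Measure.conv _ _ = _
  rw [gaussianReal_conv_gaussianReal]
  congr 1
  · simp
  · ext; simp [hab]

lemma stdGaussian_prod_map_linearComb (n : ℕ) {a b : ℝ} (hab : a ^ 2 + b ^ 2 = 1) :
    ((stdGaussian n).prod (stdGaussian n)).map (fun p => a • p.1 + b • p.2) = stdGaussian n := by
  have hpair := measurePreserving_arrowProdEquivProdArrow ℝ ℝ (Fin n)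
    (fun _ => gaussianReal 0 1) (fun _ => gaussianReal 0 1)
  have hcoord := measurePreserving_pi (fun _ : Fin n => (gaussianReal 0 1).prod (gaussianReal 0 1))
    (fun _ => gaussianReal 0 1) (f := fun _ (p : ℝ × ℝ) => a * p.1 + b * p.2)
    (fun _ => ⟨by fun_prop, gaussianReal_prod_map_linearComb hab⟩)
  rw [_root_.stdGaussian, ← hpair.map_eq, Measure.map_map (by fun_prop) hpair.measurable]
  exact hcoord.map_eq

lemma prod_stdGaussian_map_linearComb {n : ℕ} {Ω : Type*} [MeasurableSpace Ω] {μ : Measure Ω}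
    [SigmaFinite μ] {G : Ω → Fin n → ℝ} (hG : Measurable G) (hlaw : μ.map G = stdGaussian n)
    {a b : ℝ} (hab : a ^ 2 + b ^ 2 = 1) :
    (μ.prod (stdGaussian n)).map (fun p => a • G p.1 + b • p.2) = stdGaussian n := by
  have hcomp : (fun p : Ω × (Fin n → ℝ) => a • G p.1 + b • p.2)
      = (fun p : (Fin n → ℝ) × (Fin n → ℝ) => a • p.1 + b • p.2) ∘ Prod.map G id := rfl
  rw [hcomp, ← Measure.map_map (by fun_prop) (hG.prodMap measurable_id),
    ← Measure.map_prod_map _ _ hG measurable_id, hlaw, Measure.map_id,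
    stdGaussian_prod_map_linearComb n hab]

lemma IsSumOfGaussians.of_fintype {n : ℕ} {ι : Type*} [Fintype ι] {Ω : Type} [MeasurableSpace Ω]
    (μ : Measure Ω) [IsProbabilityMeasure μ] (G : ι → Ω → Fin n → ℝ) (hG : ∀ i, Measurable (G i))
    (hlaw : ∀ i, μ.map (G i) = stdGaussian n) :
    IsSumOfGaussians n (Fintype.card ι) (μ.map fun ω => ∑ i, G i ω) := by
  let e := Fintype.equivFin ι
  refine ⟨Ω, _, μ, inferInstance, fun j => G (e.symm j), fun j => hG _, fun j => hlaw _, ?_⟩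
  congr 1
  funext ω
  exact e.symm.sum_comp (G · ω)

theorem IsSumOfGaussians.map_sum_smul {n q : ℕ} {ν : Measure (Fin n → ℝ)}
    (h : IsSumOfGaussians n q ν) {ι : Type*} [Fintype ι] (a b : ι → ℝ)
    (hab : ∀ j, a j ^ 2 + b j ^ 2 = 1) (hb : ∑ j, b j = 0) :
    IsSumOfGaussians n (Fintype.card ι * q) (ν.map fun x => (∑ j, a j) • x) := by
  obtain ⟨Ω, _, μ, _, G, hG, hlaw, rfl⟩ := h
  have hsum : ∀ (ω : Ω) (z : Fin n → ℝ),
      ∑ p : ι × Fin q, (a p.1 • G p.2 ω + b p.1 • z) = (∑ j, a j) • ∑ i, G i ω := by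
    intro ω z
    simp only [Fintype.sum_prod_type, Finset.sum_add_distrib, ← Finset.smul_sum, Finset.sum_const,
      Finset.card_univ, ← Finset.sum_smul, hb, zero_smul, smul_zero, add_zero]
  have hX : Measurable fun ω => ∑ i, G i ω := Finset.measurable_sum _ fun i _ => hG i
  have hfst : (μ.prod (stdGaussian n)).map (fun x => ∑ i, G i x.1) = μ.map fun ω => ∑ i, G i ω :=
    calc _ = ((μ.prod (stdGaussian n)).map Prod.fst).map fun ω => ∑ i, G i ω :=
          (Measure.map_map hX measurable_fst).symm
      _ = _ := by rw [Measure.map_fst_prod, measure_univ, one_smul]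
  have hcard : Fintype.card (ι × Fin q) = Fintype.card ι * q := by simp
  have hrotated := IsSumOfGaussians.of_fintype (μ.prod (stdGaussian n))
    (fun (p : ι × Fin q) (x : Ω × (Fin n → ℝ)) => a p.1 • G p.2 x.1 + b p.1 • x.2)
    (fun p => by fun_prop) (fun p => prod_stdGaussian_map_linearComb (hG p.2) (hlaw p.2) (hab p.1))
  simp only [hsum, hcard] at hrotated
  rwa [← hfst, Measure.map_map (by fun_prop) (by fun_prop)]

/-- If `X` is a sum of `q` standard Gaussian random vectors in `ℝⁿ`, then for any `τ > 0`,
`τX` is a sum of `(⌊τ⌋ + 2)q` standard Gaussian random vectors. -/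
theorem isSumOfGaussians_smul (n q : ℕ) (ν : Measure (Fin n → ℝ))
    (h : IsSumOfGaussians n q ν) (τ : ℝ) (hτ : 0 < τ) :
    IsSumOfGaussians n ((Nat.floor τ + 2) * q) (ν.map (fun x => τ • x)) := by
  set m := ⌊τ⌋₊
  set δ := τ - m
  have hδ_sq : (δ / 2) ^ 2 ≤ 1 := by
    have := Nat.floor_le hτ.le
    have := Nat.lt_floor_add_one τ
    nlinarith
  set s := √(1 - (δ / 2) ^ 2)
  have hs : (δ / 2) ^ 2 + s ^ 2 = 1 := by rw [Real.sq_sqrt (by linarith)]; ring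
  let a : Fin (m + 2) → ℝ := Fin.append (fun _ => 1) ![δ / 2, δ / 2]
  let b : Fin (m + 2) → ℝ := Fin.append 0 ![s, -s]
  have hab : ∀ j, a j ^ 2 + b j ^ 2 = 1 :=
    Fin.addCases (by simp [a, b]) (by simp [a, b, Fin.forall_fin_two, hs])
  have ha : ∑ j, a j = τ := by simp [a, Fin.sum_univ_add, δ]
  have hb : ∑ j, b j = 0 := by simp [b, Fin.sum_univ_add]
  simpa [ha] using h.map_sum_smul a b hab hb
end
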